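/- arXiv:2402.00768 — 2 statements merged into one kernel-verified Lean document; each statement's English description precedes it below -/
import Mathlib

section
/- (Limit relation to multiple Kravchuk polynomials.) Fix N ∈ ℕ, r ≥ 1, n ∈ ℕ^r with |n| ≤ N, and pairwise distinct p_1,…,p_r ∈ (0,1); set β_i = 1 − p_i. For each q > 0, q ≠ 1, let K_q be the unique monic multiple q-Kravchuk polynomial of multi-index n (monic of degree |n| with Σ_{s=0}^{N} K_q(x_q(s)) [s]_q^{(k)} υ_q^{p_i,β_i,N}(s) q^{s−1/2} = 0 for 0 ≤ k ≤ n_i − 1, i = 1,…,r, where x_q(s) = (q^s − 1)/(q − 1)), and let K be the unique monic multiple Kravchuk polynomial of multi-index n (monic of degree |n| with Σ_{x=0}^{N} K(x) (−x)_j υ^{p_i,N}(x) = 0 for 0 ≤ j ≤ n_i − 1, i = 1,…,r). Then for every integer 0 ≤ s ≤ N, lim_{q→1} K_q(x_q(s)) = K(s); equivalently, each coefficient of K_q converges to the corresponding coefficient of K as q → 1. -/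
open Finset

/-- The non-uniform lattice `x(s) = (q^s - 1)/(q - 1)`. -/
noncomputable def qlat (q : ℝ) (s : ℤ) : ℝ := (q ^ s - 1) / (q - 1)

/-- The `q`-Stirling polynomial `[s]_q^{(k)} = ∏_{j=0}^{k-1} (q^{s-j} - 1)/(q - 1)`. -/
noncomputable def qStir (q : ℝ) (s : ℤ) (k : ℕ) : ℝ :=
  ∏ j ∈ Finset.range k, (q ^ (s - (j : ℤ)) - 1) / (q - 1)

/-- The symmetric `q`-number `[m]_q = q^{(1-m)/2}(q^m - 1)/(q - 1)`. -/
noncomputable def qNum (q : ℝ) (m : ℕ) : ℝ :=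
  q ^ ((1 - (m : ℝ)) / 2) * (q ^ m - 1) / (q - 1)

/-- The `q`-factorial `[M]_q! = ∏_{k=1}^{M} [k]_q`. -/
noncomputable def qFact (q : ℝ) (M : ℕ) : ℝ := ∏ k ∈ Finset.range M, qNum q (k + 1)

/-- The `q`-Kravchuk weight `υ_q^{p,β,N}(s)` supported on the integers `0 ≤ s ≤ N`. -/
noncomputable def qWeight (q p β : ℝ) (N : ℕ) (s : ℤ) : ℝ :=
  if 0 ≤ s ∧ s ≤ (N : ℤ) then
    q ^ (s * (s - 1) / 2) * qFact q N * p ^ s * β ^ ((N : ℤ) - s) /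
      (qFact q s.toNat * qFact q (N - s.toNat))
  else 0

/-- The orthogonality sum `Σ_{s=0}^{N} K(x(s)) [s]_q^{(k)} υ_q^{p,β,N}(s) q^{s-1/2}`. -/
noncomputable def qOrth (q p β : ℝ) (N : ℕ) (K : Polynomial ℝ) (k : ℕ) : ℝ :=
  ∑ s ∈ Finset.range (N + 1),
    K.eval (qlat q (s : ℤ)) * qStir q (s : ℤ) k * qWeight q p β N (s : ℤ) *
      q ^ ((s : ℝ) - 1 / 2)

/-- The classical Kravchuk weight `υ^{p,N}(x) = N! p^x (1-p)^{N-x}/(x!(N-x)!)`. -/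
noncomputable def kWeight (p : ℝ) (N : ℕ) (x : ℕ) : ℝ :=
  if x ≤ N then
    (N.factorial : ℝ) * p ^ x * (1 - p) ^ (N - x) / ((x.factorial : ℝ) * (N - x).factorial)
  else 0

/-- The Pochhammer symbol `(-x)_j = (-x)(-x+1)⋯(-x+j-1)`. -/
noncomputable def pochNeg (x : ℝ) (j : ℕ) : ℝ := ∏ l ∈ Finset.range j, (-x + l)

/-!
Write a monic polynomial of degree `M = |n|` as `X ^ M + ∑_{m < M} c_m X ^ m`. The `M`
orthogonality conditions defining `K_q` form a square linear system for the `c_m` whose entries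
are continuous at `q = 1` (`x_q(s) → s`, `[s]_q^{(k)} → s(s-1)⋯(s-k+1)`,
`υ_q^{p,1-p,N} → υ^{p,N}`); the limit system is the one defining `K`, since
`(-x)_k = (-1)^k x(x-1)⋯(x-k+1)`. The limit system is invertible: if `P ≠ 0` of degree `d < M`
had vanishing classical moments, then `f = ∑_x P(x) C(N,x) X^x` would vanish to order `n_i` at
each `t_i = p_i/(1-p_i)` and be divisible by `(X + 1)^(N-d)`, too much for a nonzero polynomial of
degree `≤ N`. By Cramer's rule the coefficients of `K_q` converge to those of `K`.
-/

open Polynomial Filter Topology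

open Matrix in
theorem tendsto_of_mulVec_eq {α ι : Type*} [Fintype ι] [DecidableEq ι] {l : Filter α}
    {A : α → Matrix ι ι ℝ} {A₀ : Matrix ι ι ℝ} {v b : α → ι → ℝ} {v₀ b₀ : ι → ℝ}
    (hA : Tendsto A l (𝓝 A₀)) (hb : Tendsto b l (𝓝 b₀)) (hA₀ : A₀.det ≠ 0)
    (hv : ∀ᶠ a in l, A a *ᵥ v a = b a) (hv₀ : A₀ *ᵥ v₀ = b₀) :
    Tendsto v l (𝓝 v₀) := by
  have hdet : ∀ᶠ a in l, (A a).det ≠ 0 :=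
    ((continuous_id.matrix_det.tendsto A₀).comp hA).eventually_ne hA₀
  have hinv : Tendsto (fun a => (A a)⁻¹) l (𝓝 A₀⁻¹) := by
    refine (continuousAt_matrix_inv A₀ ?_).tendsto.comp hA
    rw [Ring.inverse_eq_inv']
    exact continuousAt_inv₀ hA₀
  have hsol : Tendsto (fun a => (A a)⁻¹ *ᵥ b a) l (𝓝 (A₀⁻¹ *ᵥ b₀)) :=
    ((continuous_fst.matrix_mulVec continuous_snd).tendsto _).comp (hinv.prodMk_nhds hb)
  rw [← hv₀, mulVec_mulVec, nonsing_inv_mul _ (isUnit_iff_ne_zero.2 hA₀), one_mulVec] at hsol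
  refine hsol.congr' ?_
  filter_upwards [hv, hdet] with a ha hda
  rw [← ha, mulVec_mulVec, nonsing_inv_mul _ (isUnit_iff_ne_zero.2 hda), one_mulVec]

section MonomialMatrix

variable {ι : Type*} [Fintype ι] {M : ℕ} (e : ι ≃ Fin M)

theorem Polynomial.Monic.map_eq_sum {P : ℝ[X]} (hP : P.Monic) (hPd : P.natDegree = M)
    (φ : ℝ[X] →ₗ[ℝ] ℝ) :
    φ P = ∑ κ, φ (X ^ (e κ : ℕ)) * P.coeff (e κ) + φ (X ^ M) := by
  conv_lhs => rw [hP.as_sum, hPd]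
  simp only [map_add, map_sum, C_mul', map_smul, smul_eq_mul]
  rw [e.sum_comp (fun m => φ (X ^ (m : ℕ)) * P.coeff m),
    Fin.sum_univ_eq_sum_range (fun m => φ (X ^ m) * P.coeff m) M, add_comm]
  simp only [mul_comm]

theorem det_ne_zero_of_forall_map_eq_zero [DecidableEq ι] {φ : ι → ℝ[X] →ₗ[ℝ] ℝ}
    (hφ : ∀ Q : ℝ[X], Q.degree < M → (∀ j, φ j Q = 0) → Q = 0) :
    (Matrix.of fun j κ => φ j (X ^ (e κ : ℕ))).det ≠ 0 := by
  rw [Ne, ← Matrix.exists_mulVec_eq_zero_iff]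
  rintro ⟨v, hv, hAv⟩
  refine hv (funext fun κ => ?_)
  have hQ := hφ (∑ k : Fin M, C (v (e.symm k)) * X ^ (k : ℕ)) (degree_sum_fin_lt _) fun j => by
    have := congr_fun hAv j
    simp only [Matrix.mulVec, dotProduct, Matrix.of_apply, Pi.zero_apply] at this
    simp only [map_sum, C_mul', map_smul, smul_eq_mul]
    rw [← this, ← e.sum_comp]
    exact Finset.sum_congr rfl fun κ _ => by simp [mul_comm]
  simpa [finsetSum_coeff, coeff_C_mul_X_pow, Fin.val_inj] using congr_arg (coeff · (e κ)) hQ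

end MonomialMatrix

theorem tendsto_coeff_of_forall_map_eq_zero {α ι : Type*} [Fintype ι] {l : Filter α} {M : ℕ}
    (hι : Fintype.card ι = M) {φ : α → ι → ℝ[X] →ₗ[ℝ] ℝ} {φ₀ : ι → ℝ[X] →ₗ[ℝ] ℝ}
    (hφ : ∀ j m, Tendsto (fun a => φ a j (X ^ m)) l (𝓝 (φ₀ j (X ^ m))))
    (hφ₀ : ∀ Q : ℝ[X], Q.degree < M → (∀ j, φ₀ j Q = 0) → Q = 0)
    {P : α → ℝ[X]} {P₀ : ℝ[X]}
    (hP : ∀ᶠ a in l, (P a).Monic ∧ (P a).natDegree = M ∧ ∀ j, φ a j (P a) = 0)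
    (hP₀ : P₀.Monic) (hP₀d : P₀.natDegree = M) (hP₀φ : ∀ j, φ₀ j P₀ = 0) (m : ℕ) :
    Tendsto (fun a => (P a).coeff m) l (𝓝 (P₀.coeff m)) := by
  classical
  rcases lt_or_ge m M with hm | hm
  swap
  · have hcoeff_high : ∀ Q : ℝ[X], Q.Monic → Q.natDegree = M →
        Q.coeff m = if m = M then 1 else 0 := by
      rintro Q hQ rfl
      split_ifs with h
      · exact h ▸ hQ.coeff_natDegree
      · exact coeff_eq_zero_of_natDegree_lt (by omega)
    rw [hcoeff_high P₀ hP₀ hP₀d]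
    refine tendsto_const_nhds.congr' ?_
    filter_upwards [hP] with a ha using (hcoeff_high _ ha.1 ha.2.1).symm
  let e := Fintype.equivFinOfCardEq hι
  have hcoeff := tendsto_of_mulVec_eq (v := fun a κ => (P a).coeff (e κ))
    (A := fun a => Matrix.of fun j κ => φ a j (X ^ (e κ : ℕ))) (b := fun a j => -φ a j (X ^ M))
    (tendsto_pi_nhds.2 fun j => tendsto_pi_nhds.2 fun κ => hφ j _)
    (tendsto_pi_nhds.2 fun j => (hφ j M).neg) (det_ne_zero_of_forall_map_eq_zero e hφ₀)
    (hP.mono fun a ⟨hmon, hdeg, horth⟩ => funext fun j => by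
      simp only [Matrix.mulVec, dotProduct, Matrix.of_apply]
      linarith [(hmon.map_eq_sum e hdeg (φ a j)).symm.trans (horth j)])
    (funext fun j => by
      simp only [Matrix.mulVec, dotProduct]
      linarith [(hP₀.map_eq_sum e hP₀d (φ₀ j)).symm.trans (hP₀φ j)])
  simpa using tendsto_pi_nhds.1 hcoeff (e.symm ⟨m, hm⟩)

theorem tendsto_eval_of_tendsto_coeff {α : Type*} {l : Filter α} {D : ℕ} {P : α → ℝ[X]}
    {P₀ : ℝ[X]} {y : α → ℝ} {y₀ : ℝ}
    (hcoeff : ∀ m, Tendsto (fun a => (P a).coeff m) l (𝓝 (P₀.coeff m)))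
    (hP : ∀ᶠ a in l, (P a).natDegree ≤ D) (hP₀ : P₀.natDegree ≤ D) (hy : Tendsto y l (𝓝 y₀)) :
    Tendsto (fun a => (P a).eval (y a)) l (𝓝 (P₀.eval y₀)) := by
  rw [eval_eq_sum_range' (Nat.lt_succ_of_le hP₀)]
  refine (tendsto_finsetSum _ fun m _ => (hcoeff m).mul (hy.pow m)).congr' ?_
  filter_upwards [hP] with a ha
  exact (eval_eq_sum_range' (Nat.lt_succ_of_le ha) _).symm

noncomputable def discreteFunctional (T : ℕ) (y w : ℕ → ℝ) : ℝ[X] →ₗ[ℝ] ℝ :=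
  ∑ x ∈ range T, w x • leval (y x)

theorem discreteFunctional_apply (T : ℕ) (y w : ℕ → ℝ) (P : ℝ[X]) :
    discreteFunctional T y w P = ∑ x ∈ range T, P.eval (y x) * w x := by
  simp [discreteFunctional, mul_comm]

theorem tendsto_discreteFunctional {α : Type*} {l : Filter α} {T : ℕ} {y w : α → ℕ → ℝ}
    {y₀ w₀ : ℕ → ℝ} (hy : ∀ x < T, Tendsto (fun a => y a x) l (𝓝 (y₀ x)))
    (hw : ∀ x < T, Tendsto (fun a => w a x) l (𝓝 (w₀ x))) (P : ℝ[X]) :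
    Tendsto (fun a => discreteFunctional T (y a) (w a) P) l
      (𝓝 (discreteFunctional T y₀ w₀ P)) := by
  simp only [discreteFunctional_apply]
  refine tendsto_finsetSum _ fun x hx => ?_
  exact ((P.continuous.tendsto _).comp (hy x (mem_range.1 hx))).mul (hw x (mem_range.1 hx))

noncomputable def binomialTransform (N : ℕ) : ℝ[X] →ₗ[ℝ] ℝ[X] :=
  ∑ x ∈ range (N + 1), (N.choose x : ℝ) • (leval (x : ℝ)).smulRight (X ^ x)

section BinomialTransform

variable {N : ℕ}

theorem binomialTransform_apply (P : ℝ[X]) :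
    binomialTransform N P = ∑ x ∈ range (N + 1), C (P.eval (x : ℝ) * N.choose x) * X ^ x := by
  simp only [binomialTransform, LinearMap.sum_apply, LinearMap.smul_apply,
    LinearMap.smulRight_apply, leval_apply, smul_eq_C_mul, C_mul]
  exact sum_congr rfl fun x _ => by ring

theorem coeff_binomialTransform {j : ℕ} (hj : j ≤ N) (P : ℝ[X]) :
    (binomialTransform N P).coeff j = P.eval (j : ℝ) * N.choose j := by
  rw [binomialTransform_apply, finsetSum_coeff,
    sum_eq_single_of_mem j (mem_range.2 (Nat.lt_succ_of_le hj))]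
  · rw [coeff_C_mul_X_pow, if_pos rfl]
  · intro x _ hx
    rw [coeff_C_mul_X_pow, if_neg (Ne.symm hx)]

theorem natDegree_binomialTransform_le (P : ℝ[X]) : (binomialTransform N P).natDegree ≤ N := by
  rw [binomialTransform_apply]
  refine natDegree_sum_le_of_forall_le _ _ fun x hx => (natDegree_C_mul_X_pow_le _ _).trans ?_
  exact Nat.le_of_lt_succ (mem_range.1 hx)

theorem binomialTransform_ne_zero {P : ℝ[X]} (hP : P ≠ 0) (hPN : P.natDegree ≤ N) :
    binomialTransform N P ≠ 0 := by
  intro h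
  refine hP (eq_zero_of_natDegree_lt_card_of_eval_eq_zero P (f := fun x : Fin (N + 1) => (x : ℝ))
    (fun x y hxy => Fin.ext (Nat.cast_injective hxy)) (fun x => ?_)
    (by simpa using Nat.lt_succ_of_le hPN))
  have hx := Nat.le_of_lt_succ x.isLt
  have := coeff_binomialTransform hx P
  rw [h, coeff_zero, eq_comm, mul_eq_zero] at this
  exact this.resolve_right (Nat.cast_ne_zero.2 (Nat.choose_pos hx).ne')

theorem X_mul_derivative_binomialTransform (P : ℝ[X]) :
    X * derivative (binomialTransform N P) = binomialTransform N (X * P) := by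
  simp only [binomialTransform_apply, derivative_sum, derivative_C_mul_X_pow, mul_sum, eval_mul,
    eval_X]
  refine sum_congr rfl fun x _ => ?_
  rcases x with _ | x
  · simp
  · rw [Nat.add_sub_cancel, mul_left_comm, ← pow_succ']
    push_cast
    simp only [map_add, map_mul, map_one, map_natCast]
    ring

-- `binomialTransform N (X ^ j)` is `(X d/dX)^j (X + 1)^N`.
theorem X_add_one_pow_sub_dvd_binomialTransform_X_pow (j : ℕ) :
    (X + 1) ^ (N - j) ∣ binomialTransform N (X ^ j) := by
  induction j with
  | zero =>
    rw [pow_zero, Nat.sub_zero, binomialTransform_apply, add_pow]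
    simp [mul_comm]
  | succ j ih =>
    rw [pow_succ', ← X_mul_derivative_binomialTransform, Nat.sub_succ]
    exact dvd_mul_of_dvd_right (pow_sub_one_dvd_derivative_of_pow_dvd ih) _

theorem X_add_one_pow_sub_natDegree_dvd_binomialTransform (P : ℝ[X]) :
    (X + 1) ^ (N - P.natDegree) ∣ binomialTransform N P := by
  conv_rhs => rw [P.as_sum_range_C_mul_X_pow]
  simp only [map_sum, C_mul', map_smul]
  refine dvd_sum fun j hj => ?_
  rw [smul_eq_C_mul]
  refine dvd_mul_of_dvd_right
    ((pow_dvd_pow _ ?_).trans (X_add_one_pow_sub_dvd_binomialTransform_X_pow j)) _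
  exact Nat.sub_le_sub_left (Nat.le_of_lt_succ (mem_range.1 hj)) N

theorem pow_mul_eval_iterate_derivative_binomialTransform (P : ℝ[X]) (k : ℕ) (t : ℝ) :
    t ^ k * (derivative^[k] (binomialTransform N P)).eval t =
      ∑ x ∈ range (N + 1), P.eval (x : ℝ) * x.descFactorial k * N.choose x * t ^ x := by
  simp only [binomialTransform_apply, iterate_derivative_sum, iterate_derivative_C_mul,
    iterate_derivative_X_pow_eq_C_mul, eval_finsetSum, eval_mul, eval_C, eval_pow, eval_X,
    mul_sum]
  refine sum_congr rfl fun x _ => ?_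
  rcases le_or_gt k x with hkx | hkx
  · rw [← Nat.add_sub_cancel' hkx, pow_add, Nat.add_sub_cancel_left]
    ring
  · simp [Nat.descFactorial_eq_zero_iff_lt.2 hkx]

end BinomialTransform

theorem eq_zero_of_binomial_moments_eq_zero {ι : Type*} [Fintype ι] {N : ℕ} {n : ι → ℕ}
    (hn : ∑ i, n i ≤ N) {t : ι → ℝ} (ht : Function.Injective t) (ht0 : ∀ i, t i ≠ 0)
    (ht1 : ∀ i, t i ≠ -1) {P : ℝ[X]} (hP : P.degree < ↑(∑ i, n i))
    (hmom : ∀ i, ∀ k < n i,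
      ∑ x ∈ range (N + 1), P.eval (x : ℝ) * x.descFactorial k * N.choose x * t i ^ x = 0) :
    P = 0 := by
  classical
  by_contra hP0
  have hd : P.natDegree < ∑ i, n i := (natDegree_lt_iff_degree_lt hP0).2 hP
  set f := binomialTransform N P
  have hf0 : f ≠ 0 := binomialTransform_ne_zero hP0 (by omega)
  have hroot : ∀ i, (X - C (t i)) ^ n i ∣ f := fun i => by
    rcases Nat.eq_zero_or_pos (n i) with h | h
    · simp [h]
    refine (pow_dvd_pow _ ?_).trans (pow_rootMultiplicity_dvd f (t i))
    refine Nat.le_of_pred_lt (lt_rootMultiplicity_of_isRoot_iterate_derivative hf0 fun k hk => ?_)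
    have := (pow_mul_eval_iterate_derivative_binomialTransform P k (t i)).trans
      (hmom i k (Nat.lt_of_le_pred h hk))
    exact (mul_eq_zero.1 this).resolve_left (pow_ne_zero _ (ht0 i))
  have hprod : (∏ i, (X - C (t i)) ^ n i) ∣ f :=
    prod_dvd_of_coprime (fun i _ j _ hij => (pairwise_coprime_X_sub_C ht hij).pow)
      fun i _ => hroot i
  have hX1 : (X + 1 : ℝ[X]) = X - C (-1) := by simp
  have hcop : IsCoprime (∏ i, (X - C (t i)) ^ n i) ((X - C (-1)) ^ (N - P.natDegree)) :=
    IsCoprime.prod_left fun i _ =>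
      (isCoprime_X_sub_C_of_isUnit_sub (sub_ne_zero.2 (ht1 i)).isUnit).pow
  have hmonic : ∀ i ∈ univ, ((X - C (t i)) ^ n i).Monic := fun i _ => (monic_X_sub_C _).pow _
  have hle := natDegree_le_of_dvd
    (hcop.mul_dvd hprod (hX1 ▸ X_add_one_pow_sub_natDegree_dvd_binomialTransform P)) hf0
  rw [(monic_prod_of_monic _ _ hmonic).natDegree_mul ((monic_X_sub_C _).pow _),
    natDegree_prod_of_monic _ _ hmonic] at hle
  simp only [natDegree_pow, natDegree_X_sub_C, mul_one] at hle
  have : f.natDegree ≤ N := natDegree_binomialTransform_le P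
  omega

theorem tendsto_rpow_nhdsNE_one (c : ℝ) : Tendsto (fun q : ℝ => q ^ c) (𝓝[≠] 1) (𝓝 1) := by
  simpa using (Real.continuousAt_rpow_const 1 c (.inl one_ne_zero)).tendsto.mono_left
    nhdsWithin_le_nhds

theorem tendsto_zpow_nhdsNE_one (z : ℤ) : Tendsto (fun q : ℝ => q ^ z) (𝓝[≠] 1) (𝓝 1) := by
  simpa using (continuousAt_zpow₀ (1 : ℝ) z (.inl one_ne_zero)).tendsto.mono_left
    nhdsWithin_le_nhds

theorem tendsto_qlat (s : ℤ) : Tendsto (fun q => qlat q s) (𝓝[≠] 1) (𝓝 (s : ℝ)) := by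
  have h := hasDerivAt_iff_tendsto_slope.1 (hasDerivAt_zpow s (1 : ℝ) (.inl one_ne_zero))
  rw [one_zpow, mul_one] at h
  refine h.congr fun q => ?_
  rw [slope_def_field, one_zpow, qlat]

theorem tendsto_qStir (s k : ℕ) :
    Tendsto (fun q => qStir q s k) (𝓝[≠] 1) (𝓝 (s.descFactorial k : ℝ)) := by
  rw [← descPochhammer_eval_eq_descFactorial, descPochhammer_eval_eq_prod_range]
  exact tendsto_finsetProd _ fun j _ => by simpa [qlat] using tendsto_qlat ((s : ℤ) - j)

theorem tendsto_qNum (m : ℕ) : Tendsto (fun q => qNum q m) (𝓝[≠] 1) (𝓝 (m : ℝ)) := by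
  simpa [qNum, qlat, mul_div_assoc] using
    (tendsto_rpow_nhdsNE_one ((1 - m) / 2)).mul (tendsto_qlat m)

theorem tendsto_qFact (m : ℕ) :
    Tendsto (fun q => qFact q m) (𝓝[≠] 1) (𝓝 (m.factorial : ℝ)) := by
  rw [← prod_range_add_one_eq_factorial, Nat.cast_prod]
  exact tendsto_finsetProd _ fun k _ => by simpa using tendsto_qNum (k + 1)

theorem tendsto_qWeight (p : ℝ) {N s : ℕ} (hs : s ≤ N) :
    Tendsto (fun q => qWeight q p (1 - p) N s) (𝓝[≠] 1) (𝓝 (kWeight p N s)) := by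
  have hlim := ((((tendsto_zpow_nhdsNE_one ((s : ℤ) * (s - 1) / 2)).mul
    (tendsto_qFact N)).mul_const (p ^ s)).mul_const ((1 - p) ^ (N - s))).div
    ((tendsto_qFact s).mul (tendsto_qFact (N - s))) (by positivity)
  rw [one_mul] at hlim
  have hNs : (N : ℤ) - s = ((N - s : ℕ) : ℤ) := by omega
  rw [kWeight, if_pos hs]
  refine hlim.congr fun q => ?_
  rw [qWeight, if_pos ⟨Int.natCast_nonneg s, Int.ofNat_le.2 hs⟩, Int.toNat_natCast, hNs,
    zpow_natCast, zpow_natCast, Pi.div_apply]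

noncomputable def qKravchukFunctional (q p : ℝ) (N k : ℕ) : ℝ[X] →ₗ[ℝ] ℝ :=
  discreteFunctional (N + 1) (fun s => qlat q s)
    fun s => qStir q s k * qWeight q p (1 - p) N s * q ^ ((s : ℝ) - 1 / 2)

noncomputable def kravchukFunctional (p : ℝ) (N k : ℕ) : ℝ[X] →ₗ[ℝ] ℝ :=
  discreteFunctional (N + 1) (fun x => x) fun x => x.descFactorial k * kWeight p N x

theorem qKravchukFunctional_apply (q p : ℝ) (N k : ℕ) (P : ℝ[X]) :
    qKravchukFunctional q p N k P = qOrth q p (1 - p) N P k := by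
  simp only [qKravchukFunctional, discreteFunctional_apply, qOrth, mul_assoc]

theorem tendsto_qKravchukFunctional (p : ℝ) (N k : ℕ) (P : ℝ[X]) :
    Tendsto (fun q => qKravchukFunctional q p N k P) (𝓝[≠] 1)
      (𝓝 (kravchukFunctional p N k P)) :=
  tendsto_discreteFunctional (fun s _ => tendsto_qlat s) (fun s hs => by
    simpa using ((tendsto_qStir s k).mul (tendsto_qWeight p (Nat.le_of_lt_succ hs))).mul
      (tendsto_rpow_nhdsNE_one ((s : ℝ) - 1 / 2))) P

theorem sum_pochNeg_mul_kWeight (p : ℝ) (N k : ℕ) (P : ℝ[X]) :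
    ∑ x ∈ range (N + 1), P.eval (x : ℝ) * pochNeg x k * kWeight p N x =
      (-1) ^ k * kravchukFunctional p N k P := by
  have hpoch (x : ℕ) : pochNeg x k = (-1) ^ k * x.descFactorial k := by
    calc pochNeg x k = ∏ l ∈ range k, -((x : ℝ) - l) := prod_congr rfl fun _ _ => by ring
      _ = _ := by rw [prod_neg, card_range, ← descPochhammer_eval_eq_prod_range,
        descPochhammer_eval_eq_descFactorial]
  simp only [kravchukFunctional, discreteFunctional_apply, mul_sum, hpoch]
  exact sum_congr rfl fun _ _ => by ring

theorem kravchukFunctional_eq_binomial_moment {p : ℝ} (hp : p ≠ 1) (N k : ℕ) (P : ℝ[X]) :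
    kravchukFunctional p N k P = (1 - p) ^ N *
      ∑ x ∈ range (N + 1), P.eval (x : ℝ) * x.descFactorial k * N.choose x * (p / (1 - p)) ^ x := by
  have h1p : 1 - p ≠ 0 := sub_ne_zero.2 hp.symm
  simp only [kravchukFunctional, discreteFunctional_apply, mul_sum]
  refine sum_congr rfl fun x hx => ?_
  have hx : x ≤ N := Nat.le_of_lt_succ (mem_range.1 hx)
  rw [kWeight, if_pos hx, Nat.cast_choose ℝ hx, div_pow, ← Nat.sub_add_cancel hx, pow_add,
    Nat.add_sub_cancel]
  field_simp

theorem eq_zero_of_kravchukFunctional_eq_zero {ι : Type*} [Fintype ι] {N : ℕ} {n : ι → ℕ}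
    (hn : ∑ i, n i ≤ N) {p : ι → ℝ} (hp : ∀ i, 0 < p i ∧ p i < 1)
    (hdist : ∀ i j, i ≠ j → p i ≠ p j) {P : ℝ[X]} (hP : P.degree < ↑(∑ i, n i))
    (horth : ∀ i, ∀ k < n i, kravchukFunctional (p i) N k P = 0) :
    P = 0 := by
  have h1p (i : ι) : 1 - p i ≠ 0 := sub_ne_zero.2 (hp i).2.ne'
  refine eq_zero_of_binomial_moments_eq_zero hn (t := fun i => p i / (1 - p i))
    (fun i j hij => ?_) (fun i => div_ne_zero (hp i).1.ne' (h1p i)) (fun i => ?_) hP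
    fun i k hk => ?_
  · by_contra hne
    rw [div_eq_div_iff (h1p i) (h1p j)] at hij
    exact hdist i j hne (by linarith)
  · rw [Ne, div_eq_iff (h1p i)]
    linarith
  · have := horth i k hk
    rw [kravchukFunctional_eq_binomial_moment (hp i).2.ne] at this
    exact (mul_eq_zero.1 this).resolve_left (pow_ne_zero _ (h1p i))

theorem stmt10_general (N r : ℕ) (n : Fin r → ℕ) (hn : ∑ i, n i ≤ N)
    (p : Fin r → ℝ) (hp : ∀ i, 0 < p i ∧ p i < 1)
    (hdist : ∀ i j, i ≠ j → p i ≠ p j)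
    (β : Fin r → ℝ) (hβ : ∀ i, β i = 1 - p i)
    (Kq : ℝ → Polynomial ℝ)
    (hKq : ∀ q : ℝ, 0 < q → q ≠ 1 → (Kq q).Monic ∧ (Kq q).natDegree = ∑ i, n i ∧
      ∀ i : Fin r, ∀ k, k < n i → qOrth q (p i) (β i) N (Kq q) k = 0)
    (K : Polynomial ℝ) (hmonic : K.Monic) (hdeg : K.natDegree = ∑ i, n i)
    (horth : ∀ i : Fin r, ∀ j, j < n i →
      ∑ x ∈ Finset.range (N + 1),
        K.eval (x : ℝ) * pochNeg (x : ℝ) j * kWeight (p i) N x = 0) :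
    ∀ s : ℕ, s ≤ N →
      Filter.Tendsto (fun q : ℝ => (Kq q).eval (qlat q (s : ℤ)))
        (nhdsWithin 1 {q : ℝ | 0 < q ∧ q ≠ 1}) (nhds (K.eval (s : ℝ))) := by
  intro s _
  obtain rfl : β = fun i => 1 - p i := funext hβ
  have hle : 𝓝[{q : ℝ | 0 < q ∧ q ≠ 1}] 1 ≤ 𝓝[≠] 1 := nhdsWithin_mono 1 fun q hq => hq.2
  have hKq_eventually : ∀ᶠ q in 𝓝[{q : ℝ | 0 < q ∧ q ≠ 1}] 1, (Kq q).Monic ∧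
      (Kq q).natDegree = ∑ i, n i ∧
      ∀ ρ : (i : Fin r) × Fin (n i), qKravchukFunctional q (p ρ.1) N ρ.2 (Kq q) = 0 :=
    eventually_nhdsWithin_of_forall fun q ⟨hq0, hq1⟩ => by
      obtain ⟨hmon, hdeg, horth⟩ := hKq q hq0 hq1
      exact ⟨hmon, hdeg, fun ρ => (qKravchukFunctional_apply ..).trans (horth ρ.1 ρ.2 ρ.2.isLt)⟩
  have hcoeff := tendsto_coeff_of_forall_map_eq_zero (ι := (i : Fin r) × Fin (n i)) (by simp)
    (φ := fun q ρ => qKravchukFunctional q (p ρ.1) N ρ.2)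
    (fun ρ m => (tendsto_qKravchukFunctional (p ρ.1) N ρ.2 (X ^ m)).mono_left hle)
    (fun Q hQ hQ0 => eq_zero_of_kravchukFunctional_eq_zero hn hp hdist hQ
      fun i k hk => hQ0 ⟨i, k, hk⟩) hKq_eventually hmonic hdeg fun ρ => by
    simpa [sum_pochNeg_mul_kWeight] using horth ρ.1 ρ.2 ρ.2.isLt
  exact tendsto_eval_of_tendsto_coeff hcoeff (hKq_eventually.mono fun q hq => hq.2.1.le) hdeg.le
    ((tendsto_qlat s).mono_left hle)

/-- the multiple `q`-Kravchuk polynomials converge on the lattice to the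
multiple Kravchuk polynomials as `q → 1`. -/
theorem stmt10 (N r : ℕ) (hr : 1 ≤ r) (n : Fin r → ℕ) (hn : ∑ i, n i ≤ N)
    (p : Fin r → ℝ) (hp : ∀ i, 0 < p i ∧ p i < 1)
    (hdist : ∀ i j, i ≠ j → p i ≠ p j)
    (β : Fin r → ℝ) (hβ : ∀ i, β i = 1 - p i)
    (Kq : ℝ → Polynomial ℝ)
    (hKq : ∀ q : ℝ, 0 < q → q ≠ 1 → (Kq q).Monic ∧ (Kq q).natDegree = ∑ i, n i ∧
      ∀ i : Fin r, ∀ k, k < n i → qOrth q (p i) (β i) N (Kq q) k = 0)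
    (K : Polynomial ℝ) (hmonic : K.Monic) (hdeg : K.natDegree = ∑ i, n i)
    (horth : ∀ i : Fin r, ∀ j, j < n i →
      ∑ x ∈ Finset.range (N + 1),
        K.eval (x : ℝ) * pochNeg (x : ℝ) j * kWeight (p i) N x = 0) :
    ∀ s : ℕ, s ≤ N →
      Filter.Tendsto (fun q : ℝ => (Kq q).eval (qlat q (s : ℤ)))
        (nhdsWithin 1 {q : ℝ | 0 < q ∧ q ≠ 1}) (nhds (K.eval (s : ℝ))) :=
  stmt10_general N r n hn p hp hdist β hβ Kq hKq K hmonic hdeg horth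
end

section
/- (Summation-by-parts orthogonality.) Let q > 0 with q ≠ 1, N ∈ ℕ, r ≥ 1, n ∈ ℕ^r with |n| ≤ N, p_1,…,p_r ∈ (0,1) and β_1,…,β_r > 0, and let K be a monic polynomial of degree |n| satisfying Σ_{s=0}^{N} K(x(s)) [s]_q^{(k)} υ_q^{p_i,β_i,N}(s) q^{s−1/2} = 0 for 0 ≤ k ≤ n_i − 1, i = 1,…,r. Then for each i and each 0 ≤ k ≤ n_i − 1: Σ_{s=0}^{N+1} ∇_q( υ_q^{p_i,β_i,N}(·) K(x(·)) )(s) · [s]_q^{(k+1)} · q^{s−1/2} = 0. -/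
open Finset

/-- The backward lattice difference operator `∇_q f(s) = q^{1/2-s}(f(s) - f(s-1))`. -/
noncomputable def nablaQ (q : ℝ) (f : ℤ → ℝ) (s : ℤ) : ℝ :=
  q ^ (1 / 2 - (s : ℝ)) * (f s - f (s - 1))

/-! Since the weight vanishes at `s = -1` and `s = N + 1`, summation by parts moves `∇_q` onto
`[s]_q^{(k+1)}`, and `[s]_q^{(k+1)} - [s+1]_q^{(k+1)}` is a constant multiple of
`[s]_q^{(k)} q^{s-1/2}`. The sum is therefore a multiple of the `k`-th orthogonality sum. -/

lemma qStir_succ (q : ℝ) (s : ℤ) (k : ℕ) :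
    qStir q s (k + 1) = qStir q s k * ((q ^ (s - k) - 1) / (q - 1)) :=
  prod_range_succ _ _

lemma qStir_add_one_succ (q : ℝ) (s : ℤ) (k : ℕ) :
    qStir q (s + 1) (k + 1) = qStir q s k * ((q ^ (s + 1) - 1) / (q - 1)) := by
  rw [qStir, prod_range_succ', qStir]
  congr 1
  · exact prod_congr rfl fun j _ => by push_cast; ring_nf
  · norm_num

lemma qStir_sub_qStir_add_one {q : ℝ} (hq : 0 < q) (s : ℤ) (k : ℕ) :
    qStir q s (k + 1) - qStir q (s + 1) (k + 1) =
      (q ^ ((1 : ℝ) / 2 - k) - q ^ ((3 : ℝ) / 2)) / (q - 1) * qStir q s k *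
        q ^ ((s : ℝ) - 1 / 2) := by
  have hsplit : q ^ (s - k) - q ^ (s + 1) =
      (q ^ ((1 : ℝ) / 2 - k) - q ^ ((3 : ℝ) / 2)) * q ^ ((s : ℝ) - 1 / 2) := by
    rw [sub_mul, ← Real.rpow_add hq, ← Real.rpow_add hq, ← Real.rpow_intCast,
      ← Real.rpow_intCast]
    push_cast
    ring_nf
  rw [qStir_succ, qStir_add_one_succ]
  linear_combination qStir q s k / (q - 1) * hsplit

lemma nablaQ_mul_rpow {q : ℝ} (hq : 0 < q) (f : ℤ → ℝ) (s : ℤ) :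
    nablaQ q f s * q ^ ((s : ℝ) - 1 / 2) = f s - f (s - 1) := by
  rw [nablaQ, mul_right_comm, ← Real.rpow_add hq, sub_add_sub_cancel', sub_self,
    Real.rpow_zero, one_mul]

lemma sum_range_sub_mul_of_eq_zero {R : Type*} [CommRing R] (f g : ℤ → R) (N : ℕ)
    (h₀ : f (-1) = 0) (hN : f (N + 1) = 0) :
    ∑ s ∈ range (N + 2), (f s - f (s - 1)) * g s =
      ∑ s ∈ range (N + 1), f s * (g s - g (s + 1)) := by
  simp only [sub_mul, mul_sub, sum_sub_distrib]
  rw [sum_range_succ (fun s : ℕ => f s * g s), sum_range_succ' (fun s : ℕ => f (s - 1) * g s)]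
  push_cast
  simp [h₀, hN]

lemma qWeight_neg_one (q p β : ℝ) (N : ℕ) : qWeight q p β N (-1) = 0 := by
  simp [qWeight]

lemma qWeight_add_one (q p β : ℝ) (N : ℕ) : qWeight q p β N (N + 1) = 0 := by
  simp [qWeight]

theorem stmt15_general (q : ℝ) (hq : 0 < q) (N r : ℕ)
    (n : Fin r → ℕ)
    (p β : Fin r → ℝ)
    (K : Polynomial ℝ)
    (horth : ∀ i : Fin r, ∀ k, k < n i → qOrth q (p i) (β i) N K k = 0) :
    ∀ i : Fin r, ∀ k, k < n i →
      ∑ s ∈ Finset.range (N + 2),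
        nablaQ q (fun t => qWeight q (p i) (β i) N t * K.eval (qlat q t)) (s : ℤ) *
          qStir q (s : ℤ) (k + 1) * q ^ ((s : ℝ) - 1 / 2) = 0 := by
  intro i k hk
  set F : ℤ → ℝ := fun t => qWeight q (p i) (β i) N t * K.eval (qlat q t)
  calc _ = ∑ s ∈ range (N + 2), (F s - F (s - 1)) * qStir q s (k + 1) :=
        sum_congr rfl fun s _ => by
          rw [mul_right_comm, ← nablaQ_mul_rpow hq, Int.cast_natCast]
    _ = ∑ s ∈ range (N + 1), F s * (qStir q s (k + 1) - qStir q (s + 1) (k + 1)) :=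
        sum_range_sub_mul_of_eq_zero F (qStir q · (k + 1)) N (by simp [F, qWeight_neg_one])
          (by simp [F, qWeight_add_one])
    _ = (q ^ ((1 : ℝ) / 2 - k) - q ^ ((3 : ℝ) / 2)) / (q - 1) * qOrth q (p i) (β i) N K k := by
        rw [qOrth, mul_sum]
        refine sum_congr rfl fun s _ => ?_
        rw [qStir_sub_qStir_add_one hq, Int.cast_natCast]
        ring
    _ = 0 := by rw [horth i k hk, mul_zero]

/-- summation by parts turns the orthogonality conditions for `K` into
`Σ_{s=0}^{N+1} ∇_q(υ_q^{p_i,β_i,N}(·) K(x(·)))(s) [s]_q^{(k+1)} q^{s-1/2} = 0`. -/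
theorem stmt15 (q : ℝ) (hq : 0 < q) (hq1 : q ≠ 1) (N r : ℕ) (hr : 1 ≤ r)
    (n : Fin r → ℕ) (hn : ∑ i, n i ≤ N)
    (p β : Fin r → ℝ) (hp : ∀ i, 0 < p i ∧ p i < 1) (hβ : ∀ i, 0 < β i)
    (K : Polynomial ℝ) (hmonic : K.Monic) (hdeg : K.natDegree = ∑ i, n i)
    (horth : ∀ i : Fin r, ∀ k, k < n i → qOrth q (p i) (β i) N K k = 0) :
    ∀ i : Fin r, ∀ k, k < n i →
      ∑ s ∈ Finset.range (N + 2),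
        nablaQ q (fun t => qWeight q (p i) (β i) N t * K.eval (qlat q t)) (s : ℤ) *
          qStir q (s : ℤ) (k + 1) * q ^ ((s : ℝ) - 1 / 2) = 0 :=
  stmt15_general q hq N r n p β K horth
end
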